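/- Let ∼ be an SK-congruence on a GEA E, and suppose c ∈ E satisfies: c ≥ c₁ ∼ f ⊥ c implies c₁ = f = 0 (for all c₁, f), and every e ∈ E decomposes as e = e₁ ⊕ e₂ with e₁ ≤ c and e₂ ⊥ c. Then c is central in E: c is principal, the decomposition in (1) is unique, and p, q ⊥ c with p ⊥ q implies p ⊕ q ⊥ c. -/
import Mathlib


universe u

/-- A generalized effect algebra: partial operation encoded by a definedness
relation `perp` together with a total function `op` whose values are only
meaningful when `perp` holds. -/
class GEA (E : Type u) where
  zero : E
  perp : E → E → Prop
  op : E → E → E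
  perp_comm : ∀ {e f : E}, perp e f → perp f e
  op_comm : ∀ {e f : E}, perp e f → op e f = op f e
  assoc_perp₁ : ∀ {d e f : E}, perp e f → perp d (op e f) → perp d e
  assoc_perp₂ : ∀ {d e f : E}, perp e f → perp d (op e f) → perp (op d e) f
  assoc_eq : ∀ {d e f : E}, perp e f → perp d (op e f) →
    op d (op e f) = op (op d e) f
  perp_zero : ∀ e : E, perp e zero
  op_zero : ∀ e : E, op e zero = e
  cancel : ∀ {d e f : E}, perp d e → perp d f → op d e = op d f → e = f
  pos : ∀ {e f : E}, perp e f → op e f = zero → e = zero ∧ f = zero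

namespace GEA

variable {E : Type u} [GEA E]

/-- `e ≤ f` iff `e ⊕ d = f` for some `d`. -/
def le (e f : E) : Prop := ∃ d : E, perp e d ∧ op e d = f

/-- `p` is sharp. -/
def Sharp (p : E) : Prop := ∀ d : E, le d p → perp d p → d = zero

/-- `p` is principal. -/
def Principal (p : E) : Prop :=
  ∀ e f : E, le e p → le f p → perp e f → le (op e f) p

/-- An ideal of a GEA. -/
def Ideal (S : Set E) : Prop :=
  (∀ s t : E, s ∈ S → le t s → t ∈ S) ∧
  (∀ s t : E, s ∈ S → t ∈ S → perp s t → op s t ∈ S)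

/-- `E = H ⊕ K` : a direct sum decomposition into two subsets. -/
def DirectSum (H K : Set E) : Prop :=
  (∀ h k : E, h ∈ H → k ∈ K → perp h k) ∧
  (∀ e : E, ∃! p : E × E,
    p.1 ∈ H ∧ p.2 ∈ K ∧ perp p.1 p.2 ∧ op p.1 p.2 = e)

/-- `FinSum e s x` : `x` is the (well-defined) orthosum of the finite
subfamily of `e` indexed by the finset `s`. -/
inductive FinSum {I : Type} (e : I → E) : Finset I → E → Prop
  | empty : FinSum e ∅ zero
  | cons {s : Finset I} {i : I} {x : E} (h : i ∉ s) :
      FinSum e s x → perp (e i) x → FinSum e (Finset.cons i s h) (op (e i) x)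

/-- A family is orthogonal iff all its finite partial orthosums exist. -/
def OrthoFam {I : Type} (e : I → E) : Prop := ∀ s : Finset I, ∃ x : E, FinSum e s x

/-- `m` is the orthosum of the family `e` : the family is orthogonal and `m`
is the supremum of its finite partial orthosums. -/
def IsOrthosum {I : Type} (e : I → E) (m : E) : Prop :=
  OrthoFam e ∧ (∀ (s : Finset I) (x : E), FinSum e s x → le x m) ∧
  ∀ b : E, (∀ (s : Finset I) (x : E), FinSum e s x → le x b) → le m b

/-- Dedekind orthocompleteness. -/
def DedekindOC (E : Type u) [GEA E] : Prop :=
  ∀ (I : Type) (e : I → E), OrthoFam e →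
    (∃ b : E, ∀ (s : Finset I) (x : E), FinSum e s x → le x b) →
    ∃ m : E, IsOrthosum e m

/-- A Sherstnev–Kalinin congruence on a GEA. -/
structure SKCong (E : Type u) [GEA E] (sim : E → E → Prop) : Prop where
  refl : ∀ e : E, sim e e
  symm : ∀ {e f : E}, sim e f → sim f e
  trans : ∀ {d e f : E}, sim d e → sim e f → sim d f
  sk1 : ∀ {e : E}, sim e zero → e = zero
  sk2 : ∀ {I : Type} (e f : I → E) (se sf : E), IsOrthosum e se →
    IsOrthosum f sf → (∀ i : I, sim (e i) (f i)) → sim se sf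
  sk3d : ∀ {p s t : E}, perp s t → sim p (op s t) →
    ∃ e f : E, perp e f ∧ op e f = p ∧ sim e s ∧ sim f t
  sk3e : ∀ {e f s t : E}, perp e f → perp s t → op e f = op s t →
    ∃ e₁ e₂ f₁ f₂ : E, perp e₁ e₂ ∧ op e₁ e₂ = e ∧ perp f₁ f₂ ∧ op f₁ f₂ = f ∧
      perp e₁ f₁ ∧ sim s (op e₁ f₁) ∧ perp e₂ f₂ ∧ sim t (op e₂ f₂)
  sk4a : ∀ {e f : E}, ¬ perp e f →
    ∃ e₁ f₁ : E, e₁ ≠ zero ∧ f₁ ≠ zero ∧ le e₁ e ∧ le f₁ f ∧ sim e₁ f₁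
  sk4b : ∀ {e f : E}, ¬ le e f →
    ∃ e₁ d₁ : E, e₁ ≠ zero ∧ d₁ ≠ zero ∧ le e₁ e ∧ perp d₁ f ∧ sim e₁ d₁

/-- Subequivalence: `f ≲ e`. -/
def Subeq (sim : E → E → Prop) (f e : E) : Prop :=
  ∃ e₁ : E, le e₁ e ∧ sim f e₁

/-- `e` and `f` are related. -/
def Related (sim : E → E → Prop) (e f : E) : Prop :=
  ∃ e₁ f₁ : E, e₁ ≠ zero ∧ f₁ ≠ zero ∧ le e₁ e ∧ le f₁ f ∧ sim e₁ f₁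

/-- A hereditary subset. -/
def Hereditary (sim : E → E → Prop) (H : Set E) : Prop :=
  ∀ h e : E, h ∈ H → Subeq sim e h → e ∈ H

/-- An exocentral mapping on a GEA. -/
structure Exocentral (π : E → E) : Prop where
  perp_map : ∀ {e f : E}, perp e f → perp (π e) (π f)
  op_map : ∀ {e f : E}, perp e f → π (op e f) = op (π e) (π f)
  idem : ∀ e : E, π (π e) = π e
  dec : ∀ e : E, le (π e) e
  orth : ∀ {e f : E}, π e = e → π f = zero → perp e f

/-- `π'` is the complementary mapping of `π` : `π'e = e ⊖ πe`. -/
def IsComplMap (π π' : E → E) : Prop :=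
  ∀ e : E, perp (π e) (π' e) ∧ op (π e) (π' e) = e

/-- `π` (with complement `π'`) splits the equivalence relation `sim`. -/
def Splits (sim : E → E → Prop) (π π' : E → E) : Prop :=
  ∀ e f : E, e ∈ Set.range π → f ∈ Set.range π' → sim e f →
    e = zero ∧ f = zero

/-- A hull system `(η_e)_{e ∈ E}` on a GEA, where `η e : E → E` is the hull
mapping indexed by `e`. -/
structure HullSystem (E : Type u) [GEA E] (η : E → E → E) : Prop where
  exo : ∀ e : E, Exocentral (η e)
  hs1 : ∀ x : E, η zero x = zero
  hs2 : ∀ e : E, η e e = e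
  hs3 : ∀ e f x : E, η (η e f) x = η e (η f x)
  hs3' : ∀ e f x : E, η e (η f x) = η f (η e x)

/-- A GEX-orthogonal family. -/
def GEXOrtho {I : Type} (e : I → E) : Prop :=
  ∃ π : I → E → E, (∀ i : I, Exocentral (π i)) ∧
    (∀ i j : I, i ≠ j → ∀ x : E, π i (π j x) = zero) ∧
    ∀ i : I, π i (e i) = e i

/-- Central orthocompleteness. -/
def CentrallyOC (E : Type u) [GEA E] : Prop :=
  ∀ (I : Type) (e : I → E), GEXOrtho e →
    (∃ m : E, IsOrthosum e m) ∧
    ∀ f : E, (∀ i : I, perp f (e i)) → ∀ m : E, IsOrthosum e m → perp f m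

/-- A dimension equivalence relation: an SK-congruence satisfying SK4a′. -/
def IsDER (E : Type u) [GEA E] (sim : E → E → Prop) : Prop :=
  SKCong E sim ∧
  ∀ e f : E, ¬ Related sim e f →
    ∃ π π' : E → E, Exocentral π ∧ IsComplMap π π' ∧ Splits sim π π' ∧
      π e = e ∧ π' f = f

/-- `η` is the hull system determined by the hull-determining set `Σ∼(E)` of
exocentral mappings splitting `sim` : each `η e` belongs to `Σ∼(E)` and is the
smallest member of `Σ∼(E)` fixing `e`. -/
def SigmaHull (sim : E → E → Prop) (η : E → E → E) : Prop :=
  (∀ e : E, ∃ π' : E → E, IsComplMap (η e) π' ∧ Splits sim (η e) π') ∧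
  ∀ (e : E) (π π' : E → E), Exocentral π → IsComplMap π π' →
    Splits sim π π' → π e = e →
      (∀ x : E, η e (π x) = η e x) ∧ (∀ x : E, π (η e x) = η e x)

/-- A simple element. -/
def Simple (sim : E → E → Prop) (k : E) : Prop :=
  ∀ e e' : E, perp e e' → op e e' = k → ¬ Related sim e e'

/-- A finite element. -/
def Finite' (sim : E → E → Prop) (f : E) : Prop :=
  ∀ e : E, le e f → sim e f → e = f

end GEA

section AuxCentral

variable {E : Type u} [GEA E]

namespace GEA

lemma zero_perp' (e : E) : perp zero e := perp_comm (perp_zero e)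

lemma zero_op' (e : E) : op zero e = e := by
  rw [op_comm (zero_perp' e), op_zero]

/-- Reverse associativity for a GEA. -/
lemma revAssoc {d e f : E} (hde : perp d e) (hf : perp (op d e) f) :
    perp e f ∧ perp d (op e f) ∧ op d (op e f) = op (op d e) f := by
  have A : perp f (op d e) := perp_comm hf
  have pfd : perp f d := assoc_perp₁ hde A
  have pfd_e : perp (op f d) e := assoc_perp₂ hde A
  have eq1 : op f (op d e) = op (op f d) e := assoc_eq hde A
  have B : perp e (op f d) := perp_comm pfd_e
  have pef : perp e f := assoc_perp₁ pfd B
  have pef_d : perp (op e f) d := assoc_perp₂ pfd B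
  have eq2 : op e (op f d) = op (op e f) d := assoc_eq pfd B
  refine ⟨pef, perp_comm pef_d, ?_⟩
  calc op d (op e f) = op (op e f) d := op_comm (perp_comm pef_d)
    _ = op e (op f d) := eq2.symm
    _ = op (op f d) e := (op_comm pfd_e).symm
    _ = op f (op d e) := eq1.symm
    _ = op (op d e) f := (op_comm hf).symm

lemma le_op_left' {a b : E} (h : perp a b) : le a (op a b) := ⟨b, h, rfl⟩

lemma le_op_right' {a b : E} (h : perp a b) : le b (op a b) :=
  ⟨a, perp_comm h, op_comm (perp_comm h)⟩

lemma perp_of_le' {x y z : E} (hxy : le x y) (h : perp z y) : perp z x := by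
  obtain ⟨d, hd, hop⟩ := hxy
  rw [← hop] at h
  exact assoc_perp₁ hd h

lemma le_trans'' {x y z : E} (hxy : le x y) (hyz : le y z) : le x z := by
  obtain ⟨d, hd, rfl⟩ := hxy
  obtain ⟨d', hd', rfl⟩ := hyz
  have R := revAssoc hd hd'
  exact ⟨op d d', R.2.1, R.2.2⟩

end GEA

end AuxCentral

/-- an element unrelated to its complement that induces
decompositions is central. -/
theorem invariant_decomposing_is_central {E : Type u} [GEA E]
    (sim : E → E → Prop) (hsim : GEA.SKCong E sim) (c : E)
    (h1 : ∀ c₁ f : E, GEA.le c₁ c → sim c₁ f → GEA.perp f c →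
      c₁ = GEA.zero ∧ f = GEA.zero)
    (h2 : ∀ e : E, ∃ e₁ e₂ : E, GEA.le e₁ c ∧ GEA.perp e₂ c ∧
      GEA.perp e₁ e₂ ∧ GEA.op e₁ e₂ = e) :
    GEA.Principal c ∧
    (∀ e : E, ∃! p : E × E, GEA.le p.1 c ∧ GEA.perp p.2 c ∧
      GEA.perp p.1 p.2 ∧ GEA.op p.1 p.2 = e) ∧
    (∀ p q : E, GEA.perp p q → GEA.perp p c → GEA.perp q c →
      GEA.perp (GEA.op p q) c) := by
  -- item (i): c is principal
  have hprin : GEA.Principal c := by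
    intro a b ha hb hab
    by_contra hn
    obtain ⟨g, d, hg0, hd0, hgle, hdc, hsgd⟩ := hsim.sk4b hn
    obtain ⟨g₁, g₂, hg₁, hg₂, hg₁₂, hgop⟩ := h2 g
    have hdg : sim d (GEA.op g₁ g₂) := by
      rw [hgop]; exact hsim.symm hsgd
    obtain ⟨u, v, huv, hopuv, hu, hv⟩ := hsim.sk3d hg₁₂ hdg
    have hule : GEA.le u d := by rw [← hopuv]; exact GEA.le_op_left' huv
    have huc : GEA.perp u c :=
      GEA.perp_comm (GEA.perp_of_le' hule (GEA.perp_comm hdc))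
    have h10 := h1 g₁ u hg₁ (hsim.symm hu) huc
    have hgg2 : g = g₂ := by rw [← hgop, h10.1, GEA.zero_op']
    have hgc : GEA.perp g c := by rw [hgg2]; exact hg₂
    obtain ⟨h, hgh, hopgh⟩ := hgle
    obtain ⟨a₁, a₂, b₁, b₂, ha12, hopa, hb12, hopb, hab₁, hsg, hab₂, hsh⟩ :=
      hsim.sk3e hab hgh hopgh.symm
    obtain ⟨u', v', hu'v', hopu'v', hu', hv'⟩ := hsim.sk3d hab₁ hsg
    have hu'le : GEA.le u' g := by rw [← hopu'v']; exact GEA.le_op_left' hu'v'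
    have hu'c : GEA.perp u' c :=
      GEA.perp_comm (GEA.perp_of_le' hu'le (GEA.perp_comm hgc))
    have ha₁le : GEA.le a₁ c := by
      refine GEA.le_trans'' ?_ ha
      rw [← hopa]; exact GEA.le_op_left' ha12
    have e1 := h1 a₁ u' ha₁le (hsim.symm hu') hu'c
    have hv'le : GEA.le v' g := by rw [← hopu'v']; exact GEA.le_op_right' hu'v'
    have hv'c : GEA.perp v' c :=
      GEA.perp_comm (GEA.perp_of_le' hv'le (GEA.perp_comm hgc))
    have hb₁le : GEA.le b₁ c := by
      refine GEA.le_trans'' ?_ hb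
      rw [← hopb]; exact GEA.le_op_left' hb12
    have e2 := h1 b₁ v' hb₁le (hsim.symm hv') hv'c
    apply hg0
    rw [← hopu'v', e1.2, e2.2, GEA.op_zero]
  -- key uniqueness lemma
  have key : ∀ x₁ x₂ y₁ y₂ : E, GEA.le x₁ c → GEA.perp x₂ c → GEA.perp x₁ x₂ →
      GEA.le y₁ c → GEA.perp y₂ c → GEA.perp y₁ y₂ →
      GEA.op x₁ x₂ = GEA.op y₁ y₂ → x₁ = y₁ ∧ x₂ = y₂ := by
    intro x₁ x₂ y₁ y₂ hx₁ hx₂ hx12 hy₁ hy₂ hy12 heq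
    obtain ⟨w, hw, hwc⟩ := hy₁
    have hcy₂ : GEA.perp c y₂ := GEA.perp_comm hy₂
    have hwy₁ : GEA.perp w y₁ := GEA.perp_comm hw
    have hwy₁c : GEA.op w y₁ = c := (GEA.op_comm hwy₁).trans hwc
    have hA : GEA.perp (GEA.op w y₁) y₂ := by rw [hwy₁c]; exact hcy₂
    have R1 := GEA.revAssoc hwy₁ hA
    have hwE : GEA.perp w (GEA.op x₁ x₂) := by rw [heq]; exact R1.2.1
    have hwx₁ : GEA.perp w x₁ := GEA.assoc_perp₁ hx12 hwE
    have hwx₁x₂ : GEA.perp (GEA.op w x₁) x₂ := GEA.assoc_perp₂ hx12 hwE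
    have eqA : GEA.op w (GEA.op x₁ x₂) = GEA.op (GEA.op w x₁) x₂ :=
      GEA.assoc_eq hx12 hwE
    have hwle : GEA.le w c := ⟨y₁, hwy₁, hwy₁c⟩
    obtain ⟨r, hr, hrc⟩ := hprin w x₁ hwle hx₁ hwx₁
    have hB : GEA.perp (GEA.op (GEA.op w x₁) r) y₂ := by rw [hrc]; exact hcy₂
    have R2 := GEA.revAssoc hr hB
    have chain : GEA.op (GEA.op w x₁) x₂ = GEA.op (GEA.op w x₁) (GEA.op r y₂) := by
      rw [← eqA, heq, R1.2.2, hwy₁c, R2.2.2, hrc]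
    have hx₂eq : x₂ = GEA.op r y₂ := GEA.cancel hwx₁x₂ R2.2.1 chain
    have hrlec : GEA.le r c :=
      ⟨GEA.op w x₁, GEA.perp_comm hr, (GEA.op_comm (GEA.perp_comm hr)).trans hrc⟩
    have hrperp : GEA.perp r c := by
      have hcx₂ : GEA.perp c x₂ := GEA.perp_comm hx₂
      rw [hx₂eq] at hcx₂
      exact GEA.perp_comm (GEA.assoc_perp₁ R2.1 hcx₂)
    have hr0 : r = GEA.zero := (h1 r r hrlec (hsim.refl r) hrperp).1
    have hx₂y₂ : x₂ = y₂ := by rw [hx₂eq, hr0, GEA.zero_op']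
    refine ⟨?_, hx₂y₂⟩
    have hy₁x₂ : GEA.perp y₁ x₂ := by rw [hx₂y₂]; exact hy12
    refine GEA.cancel (GEA.perp_comm hx12) (GEA.perp_comm hy₁x₂) ?_
    calc GEA.op x₂ x₁ = GEA.op x₁ x₂ := GEA.op_comm (GEA.perp_comm hx12)
      _ = GEA.op y₁ y₂ := heq
      _ = GEA.op y₁ x₂ := by rw [hx₂y₂]
      _ = GEA.op x₂ y₁ := GEA.op_comm hy₁x₂
  refine ⟨hprin, ?_, ?_⟩
  · -- item (ii): unique decomposition
    intro e
    obtain ⟨e₁, e₂, he₁, he₂, h12, hop⟩ := h2 e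
    refine ⟨(e₁, e₂), ⟨he₁, he₂, h12, hop⟩, ?_⟩
    rintro ⟨q₁, q₂⟩ ⟨hq₁, hq₂, hq12, hqop⟩
    have := key q₁ q₂ e₁ e₂ hq₁ hq₂ hq12 he₁ he₂ h12 (hqop.trans hop.symm)
    exact Prod.ext this.1 this.2
  · -- item (iii)
    intro p q hpq hpc hqc
    by_contra hn
    obtain ⟨x, y, hx0, hy0, hxle, hyle, hsxy⟩ := hsim.sk4a hn
    obtain ⟨x₁, x₂, hx₁, hx₂, hx₁₂, hxop⟩ := h2 x
    have hyx : sim y (GEA.op x₁ x₂) := by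
      rw [hxop]; exact hsim.symm hsxy
    obtain ⟨u, v, huv, hopuv, hu, hv⟩ := hsim.sk3d hx₁₂ hyx
    have hvle : GEA.le v c := by
      refine GEA.le_trans'' ?_ hyle
      rw [← hopuv]; exact GEA.le_op_right' huv
    have hvx₂ := h1 v x₂ hvle hv hx₂
    have hxeq : x = x₁ := by rw [← hxop, hvx₂.2, GEA.op_zero]
    have hxc : GEA.le x c := by rw [hxeq]; exact hx₁
    obtain ⟨h, hxh, hoph⟩ := hxle
    obtain ⟨p₁, p₂, q₁, q₂, hp12, hopp, hq12, hopq, hpq₁, hsx, hpq₂, hsh⟩ :=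
      hsim.sk3e hpq hxh hoph.symm
    obtain ⟨u', v', hu'v', hopu'v', hu', hv'⟩ := hsim.sk3d hpq₁ hsx
    have hu'le : GEA.le u' c := by
      refine GEA.le_trans'' ?_ hxc
      rw [← hopu'v']; exact GEA.le_op_left' hu'v'
    have hp₁le : GEA.le p₁ p := by rw [← hopp]; exact GEA.le_op_left' hp12
    have hp₁c : GEA.perp p₁ c :=
      GEA.perp_comm (GEA.perp_of_le' hp₁le (GEA.perp_comm hpc))
    have e1 := h1 u' p₁ hu'le hu' hp₁c
    have hv'le : GEA.le v' c := by
      refine GEA.le_trans'' ?_ hxc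
      rw [← hopu'v']; exact GEA.le_op_right' hu'v'
    have hq₁le : GEA.le q₁ q := by rw [← hopq]; exact GEA.le_op_left' hq12
    have hq₁c : GEA.perp q₁ c :=
      GEA.perp_comm (GEA.perp_of_le' hq₁le (GEA.perp_comm hqc))
    have e2 := h1 v' q₁ hv'le hv' hq₁c
    apply hx0
    rw [← hopu'v', e1.1, e2.1, GEA.op_zero]
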